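/- Let R ⊆ T be an extension of commutative rings with a common nonzero ideal I (i.e., I is simultaneously an ideal of R and of T). If I contains an element that is a non-zero-divisor of T, then T is contained in the total quotient ring T(R) of R, and indeed T ⊆ (I : I), where (I : I) = {x ∈ T(R) : xI ⊆ I}. -/

import Mathlib

/-!
If `y ∈ R` is a non-zero-divisor of `T` with `T y ⊆ R` (here any regular element of the common
ideal `I`), then `t ↦ (t y) / y` is a well-defined injective ring map `T → T(R)` extending the
identity of `R`. For `a ∈ I` it sends `t` to an element whose product with `a` is `t a ∈ I`,
so its image lies in `(I : I)`.
-/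

namespace Subring

variable {T K : Type*} [CommRing T] [CommRing K] {R : Subring T} (φ : R →+* K) (y : R)
  (hy : ∀ t : T, t * y ∈ R) (hφ : IsUnit (φ y))

noncomputable def extendOfMulMem : T →+* K where
  toFun t := φ ⟨t * y, hy t⟩ * ↑hφ.unit⁻¹
  map_one' := by simp only [one_mul, Subtype.coe_eta, IsUnit.mul_val_inv]
  map_zero' := by
    rw [show (⟨0 * y, hy 0⟩ : R) = 0 from Subtype.ext (zero_mul _), map_zero, zero_mul]
  map_add' a b := by
    have hsplit : (⟨(a + b) * y, hy _⟩ : R) = ⟨a * y, hy a⟩ + ⟨b * y, hy b⟩ :=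
      Subtype.ext (add_mul a b y)
    rw [hsplit, map_add, add_mul]
  map_mul' a b := by
    have key : φ ⟨a * b * y, hy _⟩ * φ y = φ ⟨a * y, hy a⟩ * φ ⟨b * y, hy b⟩ := by
      rw [← map_mul, ← map_mul]
      congr 1
      ext
      simp only [MulMemClass.coe_mul]
      ring
    calc φ ⟨a * b * y, hy _⟩ * ↑hφ.unit⁻¹
        = φ ⟨a * b * y, hy _⟩ * φ y * ↑hφ.unit⁻¹ * ↑hφ.unit⁻¹ := by
          rw [mul_assoc _ (φ y), hφ.mul_val_inv, mul_one]
      _ = _ := by rw [key]; ring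

@[simp]
theorem extendOfMulMem_apply_mul_self (t : T) :
    extendOfMulMem φ y hy hφ t * φ y = φ ⟨t * y, hy t⟩ := by
  simp only [extendOfMulMem, RingHom.coe_mk, MonoidHom.coe_mk, OneHom.coe_mk, mul_assoc,
    IsUnit.val_inv_mul, mul_one]

theorem extendOfMulMem_apply_mul (t : T) (a : R) (ha : t * a ∈ R) :
    extendOfMulMem φ y hy hφ t * φ a = φ ⟨t * a, ha⟩ := by
  rw [← hφ.mul_left_inj, mul_right_comm, extendOfMulMem_apply_mul_self, ← map_mul, ← map_mul]
  congr 1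
  ext
  simp only [MulMemClass.coe_mul]
  ring

@[simp]
theorem extendOfMulMem_coe (r : R) : extendOfMulMem φ y hy hφ r = φ r := by
  rw [← hφ.mul_left_inj, extendOfMulMem_apply_mul_self, ← map_mul]
  rfl

theorem extendOfMulMem_injective (hφinj : Function.Injective φ)
    (hyT : (y : T) ∈ nonZeroDivisors T) :
    Function.Injective (extendOfMulMem φ y hy hφ) := by
  intro a b hab
  have hR := hφinj <| by
    simpa only [extendOfMulMem_apply_mul_self] using congrArg (· * φ y) hab
  exact (mul_cancel_right_mem_nonZeroDivisors hyT).mp (congrArg Subtype.val hR)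

end Subring

open Subring

theorem stmt0 {T : Type*} [CommRing T] (R : Subring T)
    (I : Ideal T) (hIR : (I : Set T) ⊆ (R : Set T))
    (hreg : ∃ y ∈ I, y ∈ nonZeroDivisors T) :
    ∃ g : T →+* FractionRing ↥R, Function.Injective g ∧
      (∀ r : ↥R, g ↑r = algebraMap ↥R (FractionRing ↥R) r) ∧
      ∀ t : T, ∀ i ∈ algebraMap ↥R (FractionRing ↥R) '' {a : ↥R | (a : T) ∈ I},
        g t * i ∈ algebraMap ↥R (FractionRing ↥R) '' {a : ↥R | (a : T) ∈ I} := by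
  obtain ⟨y, hyI, hyT⟩ := hreg
  have hmul (t a : T) (ha : a ∈ I) : t * a ∈ R := hIR (I.mul_mem_left t ha)
  let yR : R := ⟨y, hIR hyI⟩
  have hyR : yR ∈ nonZeroDivisors R := mem_nonZeroDivisors_of_injective (f := R.subtype)
    Subtype.val_injective hyT
  have hunit := IsLocalization.map_units (FractionRing R) (⟨yR, hyR⟩ : nonZeroDivisors R)
  refine ⟨extendOfMulMem _ yR (hmul · y hyI) hunit,
    extendOfMulMem_injective _ _ _ _ (IsFractionRing.injective R _) hyT,
    extendOfMulMem_coe _ _ _ _, ?_⟩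
  rintro t _ ⟨a, ha, rfl⟩
  exact ⟨⟨t * a, hmul t a ha⟩, I.mul_mem_left t ha,
    (extendOfMulMem_apply_mul _ _ _ _ t a _).symm⟩
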